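/- arXiv:math/9902146 — 2 statements merged into one kernel-verified Lean document; each statement's English description precedes it below -/
import Mathlib

section
/- Let a be a finite-dimensional Lie superalgebra, K ∈ a⊗a an even, symmetric, a-invariant element, ω an automorphism of a of finite order n, and ζ a primitive n-th root of unity. Suppose (ω⊗ω)(K) = ζ·K. Then the rational function r(u,v) = Σ_{m ∈ ℤ/n} (id⊗ω^m)(K)/(u − ζ^m v) is antisymmetric, i.e. r_{12}(u,v) + r_{21}(v,u) = 0, where r_{21}(v,u) is obtained by applying the super flip to r(v,u). -/
open Matrix

/- We model the finite-dimensional Lie superalgebra `a` as a ℤ₂-graded subspace `L` of a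
matrix superalgebra `Matrix ι ι ℂ` (with parity function `par` on the indices), closed
under the supercommutator — every finite-dimensional Lie superalgebra admits such a
faithful realization.  Elements of the super tensor square `a ⊗ a` are recorded by their
coefficient matrices: `Z p q` is the coefficient of `E_{p.1 q.1} ⊗ E_{p.2 q.2}`. -/

variable {ι : Type*}

/-- Multiplication in the super tensor square, on coefficient matrices. -/
noncomputable def sMul2 [Fintype ι] (par : ι → ℕ) (Z W : Matrix (ι × ι) (ι × ι) ℂ) :
    Matrix (ι × ι) (ι × ι) ℂ :=
  Matrix.of fun p q => ∑ k : ι, ∑ l : ι,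
    (-1 : ℂ) ^ ((par k + par q.1) * (par p.2 + par l)) * Z p (k, l) * W (k, l) q

/-- The super flip `X ⊗ Y ↦ Y ⊗ X · (-1)^{deg X · deg Y}` on coefficient matrices. -/
noncomputable def sFlip (par : ι → ℕ) (Z : Matrix (ι × ι) (ι × ι) ℂ) :
    Matrix (ι × ι) (ι × ι) ℂ :=
  Matrix.of fun p q =>
    (-1 : ℂ) ^ ((par p.1 + par q.1) * (par p.2 + par q.2)) * Z (p.2, p.1) (q.2, q.1)

/-- The odd part of an element of the super tensor square. -/
noncomputable def oddPart2 (par : ι → ℕ) (Z : Matrix (ι × ι) (ι × ι) ℂ) :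
    Matrix (ι × ι) (ι × ι) ℂ :=
  Matrix.of fun p q =>
    if (par p.1 + par p.2 + par q.1 + par q.2) % 2 = 1 then Z p q else 0

/-- The supercommutator in the super tensor square. -/
noncomputable def sbr2 [Fintype ι] (par : ι → ℕ) (Z W : Matrix (ι × ι) (ι × ι) ℂ) :
    Matrix (ι × ι) (ι × ι) ℂ :=
  sMul2 par Z W - sMul2 par W Z + (2 : ℂ) • sMul2 par (oddPart2 par W) (oddPart2 par Z)

/-- The parity operator `ε` of the matrix superalgebra. -/
noncomputable def epsMat [DecidableEq ι] (par : ι → ℕ) : Matrix ι ι ℂ :=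
  Matrix.diagonal fun i => (-1 : ℂ) ^ par i

/-- The odd part of a matrix. -/
noncomputable def oddPart [Fintype ι] [DecidableEq ι] (par : ι → ℕ) (X : Matrix ι ι ℂ) :
    Matrix ι ι ℂ :=
  (2⁻¹ : ℂ) • (X - epsMat par * X * epsMat par)

/-- The supercommutator in the matrix superalgebra. -/
noncomputable def sbr [Fintype ι] [DecidableEq ι] (par : ι → ℕ) (X Y : Matrix ι ι ℂ) :
    Matrix ι ι ℂ :=
  X * Y - Y * X + (2 : ℂ) • (oddPart par Y * oddPart par X)

/-- The coefficient matrix of the pure tensor `X ⊗ Y`. -/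
noncomputable def tmat (X Y : Matrix ι ι ℂ) : Matrix (ι × ι) (ι × ι) ℂ :=
  Matrix.of fun p q => X p.1 q.1 * Y p.2 q.2

/-- `id ⊗ f` on coefficient matrices, for a linear operation `f` on the second factor. -/
noncomputable def idT (f : Matrix ι ι ℂ → Matrix ι ι ℂ) (Z : Matrix (ι × ι) (ι × ι) ℂ) :
    Matrix (ι × ι) (ι × ι) ℂ :=
  Matrix.of fun p q => f (Matrix.of fun j l => Z (p.1, j) (q.1, l)) p.2 q.2

/-- `f ⊗ id` on coefficient matrices. -/
noncomputable def tId (f : Matrix ι ι ℂ → Matrix ι ι ℂ) (Z : Matrix (ι × ι) (ι × ι) ℂ) :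
    Matrix (ι × ι) (ι × ι) ℂ :=
  Matrix.of fun p q => f (Matrix.of fun i k => Z (i, p.2) (k, q.2)) p.1 q.1

/-- `r(u,v) = Σ_{m ∈ ℤ/n} (id ⊗ ω^m)(K) / (u - ζ^m v)`. -/
noncomputable def rFun [Fintype ι] (n : ℕ) (ζ : ℂ) (ω : Matrix ι ι ℂ → Matrix ι ι ℂ)
    (K : Matrix (ι × ι) (ι × ι) ℂ) (u v : ℂ) : Matrix (ι × ι) (ι × ι) ℂ :=
  ∑ m ∈ Finset.range n, (u - ζ ^ m * v)⁻¹ • idT (ω^[m]) K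


/-! The super flip turns `id ⊗ ω^m` into `ω^m ⊗ id`, since `ω` commutes with the parity
operator; by symmetry of `K` and `(ω ⊗ ω) K = ζ K`, `ω^n = id`, this gives
`flip ((id ⊗ ω^m) K) = ζ^m (id ⊗ ω^(n-m)) K`. As `ζ^m / (v - ζ^m u) = -1 / (u - ζ^(n-m) v)`,
the flip of the `m`-th term of `r(v,u)` is minus the `(n-m)`-th term of `r(u,v)`, and
`m ↦ n - m` permutes `ℤ/n`. -/

theorem Finset.sum_range_sub_eq_of_periodic {M : Type*} [AddCancelCommMonoid M] (g : ℕ → M)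
    {n : ℕ} (hg : g n = g 0) : ∑ m ∈ Finset.range n, g (n - m) = ∑ m ∈ Finset.range n, g m := by
  have hshift : ∑ m ∈ Finset.range n, g (m + 1) = ∑ m ∈ Finset.range n, g m := by
    have h := Finset.sum_range_succ' g n
    rwa [Finset.sum_range_succ, hg, add_left_inj, eq_comm] at h
  calc ∑ m ∈ Finset.range n, g (n - m)
      = ∑ m ∈ Finset.range n, g (n - 1 - m + 1) :=
        Finset.sum_congr rfl fun m hm => by rw [Finset.mem_range] at hm; congr 1; omega
    _ = ∑ m ∈ Finset.range n, g m := by rw [Finset.sum_range_reflect (fun j => g (j + 1)), hshift]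

theorem inv_sub_mul_mul_eq_neg_inv {F : Type*} [Field F] {a b : F} (hab : a * b = 1) (u v : F) :
    (v - a * u)⁻¹ * a = -(u - b * v)⁻¹ := by
  have hb : b = a⁻¹ := eq_inv_of_mul_eq_one_right hab
  have hsub : u - b * v = -b * (v - a * u) := by linear_combination (-u) * hab
  rw [hsub, mul_inv, hb, neg_inv, inv_inv]; ring

noncomputable def idTLin (f : Matrix ι ι ℂ →ₗ[ℂ] Matrix ι ι ℂ) :
    Matrix (ι × ι) (ι × ι) ℂ →ₗ[ℂ] Matrix (ι × ι) (ι × ι) ℂ where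
  toFun := idT f
  map_add' Z W := by ext p q; exact congrArg (fun M => M p.2 q.2) (map_add f _ _)
  map_smul' c Z := by ext p q; exact congrArg (fun M => M p.2 q.2) (map_smul f c _)

noncomputable def tIdLin (f : Matrix ι ι ℂ →ₗ[ℂ] Matrix ι ι ℂ) :
    Matrix (ι × ι) (ι × ι) ℂ →ₗ[ℂ] Matrix (ι × ι) (ι × ι) ℂ where
  toFun := tId f
  map_add' Z W := by ext p q; exact congrArg (fun M => M p.1 q.1) (map_add f _ _)
  map_smul' c Z := by ext p q; exact congrArg (fun M => M p.1 q.1) (map_smul f c _)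

noncomputable def sFlipLin (par : ι → ℕ) :
    Matrix (ι × ι) (ι × ι) ℂ →ₗ[ℂ] Matrix (ι × ι) (ι × ι) ℂ where
  toFun := sFlip par
  map_add' Z W := by ext p q; simp only [sFlip, Matrix.of_apply, Matrix.add_apply]; ring
  map_smul' c Z := by
    ext p q
    simp only [sFlip, Matrix.of_apply, Matrix.smul_apply, smul_eq_mul, RingHom.id_apply]
    ring

section TensorOps

variable (f g : Matrix ι ι ℂ →ₗ[ℂ] Matrix ι ι ℂ)

theorem idT_mul (Z : Matrix (ι × ι) (ι × ι) ℂ) : idT ⇑(f * g) Z = idT f (idT g Z) := rfl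

theorem tId_mul (Z : Matrix (ι × ι) (ι × ι) ℂ) : tId ⇑(f * g) Z = tId f (tId g Z) := rfl

theorem idT_smul (c : ℂ) (Z : Matrix (ι × ι) (ι × ι) ℂ) : idT f (c • Z) = c • idT f Z :=
  (idTLin f).map_smul c Z

theorem tId_smul (c : ℂ) (Z : Matrix (ι × ι) (ι × ι) ℂ) : tId f (c • Z) = c • tId f Z :=
  (tIdLin f).map_smul c Z

theorem sFlip_smul (par : ι → ℕ) (c : ℂ) (Z : Matrix (ι × ι) (ι × ι) ℂ) :
    sFlip par (c • Z) = c • sFlip par Z :=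
  (sFlipLin par).map_smul c Z

theorem sFlip_sum (par : ι → ℕ) {α : Type*} (s : Finset α) (Z : α → Matrix (ι × ι) (ι × ι) ℂ) :
    sFlip par (∑ a ∈ s, Z a) = ∑ a ∈ s, sFlip par (Z a) :=
  map_sum (sFlipLin par) Z s

theorem idT_tmat (X Y : Matrix ι ι ℂ) : idT f (tmat X Y) = tmat X (f Y) := by
  ext p q
  have hslice : (of fun j l => tmat X Y (p.1, j) (q.1, l)) = X p.1 q.1 • Y := by
    ext j l; simp [tmat]
  change f (of fun j l => tmat X Y (p.1, j) (q.1, l)) p.2 q.2 = _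
  rw [hslice, map_smul]
  simp [tmat]

theorem tId_tmat (X Y : Matrix ι ι ℂ) : tId f (tmat X Y) = tmat (f X) Y := by
  ext p q
  have hslice : (of fun i k => tmat X Y (i, p.2) (k, q.2)) = Y p.2 q.2 • X := by
    ext i k; simp [tmat, mul_comm]
  change f (of fun i k => tmat X Y (i, p.2) (k, q.2)) p.1 q.1 = _
  rw [hslice, map_smul]
  simp [tmat, mul_comm]

theorem single_eq_tmat [DecidableEq ι] (p q : ι × ι) (x : ℂ) :
    single p q x = tmat (single p.1 q.1 x) (single p.2 q.2 1) := by
  ext p' q'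
  simp only [tmat, of_apply, single_apply, Prod.ext_iff]
  split_ifs <;> simp_all

theorem tId_idT_comm [Fintype ι] (Z : Matrix (ι × ι) (ι × ι) ℂ) :
    tId f (idT g Z) = idT g (tId f Z) := by
  classical
  change (tIdLin f ∘ₗ idTLin g) Z = (idTLin g ∘ₗ tIdLin f) Z
  induction Z using Matrix.induction_on' with
  | h_zero => simp only [map_zero]
  | h_add Z W hZ hW => simp only [map_add, hZ, hW]
  | h_std_basis p q x =>
    change tId f (idT g _) = idT g (tId f _)
    rw [single_eq_tmat, idT_tmat, tId_tmat, tId_tmat, idT_tmat]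

end TensorOps

section Parity

variable [Fintype ι] [DecidableEq ι] (par : ι → ℕ)

theorem epsMat_mul_mul_epsMat_apply (X : Matrix ι ι ℂ) (i k : ι) :
    (epsMat par * X * epsMat par) i k = (-1) ^ (par i + par k) * X i k := by
  simp only [epsMat, mul_diagonal, diagonal_mul, pow_add]
  ring

theorem sFlip_idT_tmat (f : Matrix ι ι ℂ →ₗ[ℂ] Matrix ι ι ℂ) (X Y : Matrix ι ι ℂ)
    (hY : f (epsMat par * Y * epsMat par) = epsMat par * f Y * epsMat par) :
    sFlip par (idT f (tmat X Y)) = tId f (sFlip par (tmat X Y)) := by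
  ext ⟨p₁, p₂⟩ ⟨q₁, q₂⟩
  have hslice : (of fun i k => sFlip par (tmat X Y) (i, p₂) (k, q₂))
      = X p₂ q₂ • of fun i k => (-1) ^ ((par i + par k) * (par p₂ + par q₂)) * Y i k := by
    ext i k; simp only [sFlip, tmat, of_apply, Matrix.smul_apply, smul_eq_mul]; ring
  -- the `(p₂, q₂)`-slice of the flip is `Y` or `εYε` according to the parity of `X p₂ q₂`
  change _ = f (of fun i k => sFlip par (tmat X Y) (i, p₂) (k, q₂)) p₁ q₁
  rw [hslice, map_smul, idT_tmat]
  simp only [sFlip, tmat, of_apply, Matrix.smul_apply, smul_eq_mul]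
  generalize par p₂ + par q₂ = s
  rcases Nat.even_or_odd s with hs | hs
  · have hsign (x : ℕ) : (-1 : ℂ) ^ (x * s) = 1 := (hs.mul_left x).neg_one_pow
    simp only [hsign, one_mul]
    rfl
  · have hsign (x : ℕ) : (-1 : ℂ) ^ (x * s) = (-1) ^ x := by
      rw [mul_comm, pow_mul, hs.neg_one_pow]
    have hconj : (of fun i k => (-1) ^ (par i + par k) * Y i k) = epsMat par * Y * epsMat par := by
      ext i k; rw [epsMat_mul_mul_epsMat_apply, of_apply]
    simp only [hsign, hconj, hY, epsMat_mul_mul_epsMat_apply]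
    ring

end Parity

def tensorSq (L : Submodule ℂ (Matrix ι ι ℂ)) : Submodule ℂ (Matrix (ι × ι) (ι × ι) ℂ) :=
  Submodule.span ℂ {Z | ∃ X ∈ L, ∃ Y ∈ L, Z = tmat X Y}

section TensorSq

variable {L : Submodule ℂ (Matrix ι ι ℂ)} {f : Matrix ι ι ℂ →ₗ[ℂ] Matrix ι ι ℂ}
  {Z : Matrix (ι × ι) (ι × ι) ℂ}

theorem idT_eq_self_of_mem_tensorSq (hf : ∀ Y ∈ L, f Y = Y) (hZ : Z ∈ tensorSq L) :
    idT f Z = Z := by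
  refine LinearMap.eqOn_span' (f := idTLin f) (g := LinearMap.id) ?_ hZ
  rintro _ ⟨X, -, Y, hY, rfl⟩
  exact (idT_tmat f X Y).trans (by rw [hf Y hY]; rfl)

theorem sFlip_idT_of_mem_tensorSq [Fintype ι] [DecidableEq ι] (par : ι → ℕ)
    (hf : ∀ Y ∈ L, f (epsMat par * Y * epsMat par) = epsMat par * f Y * epsMat par)
    (hZ : Z ∈ tensorSq L) : sFlip par (idT f Z) = tId f (sFlip par Z) := by
  refine LinearMap.eqOn_span'
    (f := sFlipLin par ∘ₗ idTLin f) (g := tIdLin f ∘ₗ sFlipLin par) ?_ hZ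
  rintro _ ⟨X, -, Y, hY, rfl⟩
  exact sFlip_idT_tmat par f X Y (hf Y hY)

end TensorSq

theorem Module.End.pow_commute_epsConj [Fintype ι] [DecidableEq ι] (par : ι → ℕ)
    {L : Submodule ℂ (Matrix ι ι ℂ)} {f : Module.End ℂ (Matrix ι ι ℂ)}
    (hf_mem : ∀ X ∈ L, f X ∈ L)
    (hf : ∀ X ∈ L, f (epsMat par * X * epsMat par) = epsMat par * f X * epsMat par) (m : ℕ) :
    ∀ X ∈ L, (f ^ m) (epsMat par * X * epsMat par) = epsMat par * (f ^ m) X * epsMat par := by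
  induction m with
  | zero => simp
  | succ m ih =>
    intro X hX
    rw [pow_succ, Module.End.mul_apply, Module.End.mul_apply, hf X hX, ih _ (hf_mem X hX)]

section Twisted

variable {L : Submodule ℂ (Matrix ι ι ℂ)} {ω : Module.End ℂ (Matrix ι ι ℂ)}
  {K : Matrix (ι × ι) (ι × ι) ℂ} {ζ : ℂ}

theorem idT_pow_tId_pow [Fintype ι] (hωK : idT ω (tId ω K) = ζ • K) (m : ℕ) :
    idT ⇑(ω ^ m) (tId ⇑(ω ^ m) K) = ζ ^ m • K := by
  induction m with
  | zero => rw [pow_zero, pow_zero, one_smul]; rfl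
  | succ m ih =>
    rw [pow_succ, idT_mul, tId_mul, ← tId_idT_comm, hωK, tId_smul, idT_smul, ih, smul_smul,
      pow_succ']

theorem tId_pow_eq_smul_idT_pow [Fintype ι] {n m : ℕ} (hord : ∀ Y ∈ L, (ω ^ n) Y = Y)
    (hK : K ∈ tensorSq L) (hωK : idT ω (tId ω K) = ζ • K) (hm : m ≤ n) :
    tId ⇑(ω ^ m) K = ζ ^ m • idT ⇑(ω ^ (n - m)) K := by
  have h := congrArg (idT ⇑(ω ^ (n - m))) (idT_pow_tId_pow hωK m)
  rwa [← idT_mul, ← pow_add, Nat.sub_add_cancel hm, ← tId_idT_comm,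
    idT_eq_self_of_mem_tensorSq hord hK, idT_smul] at h

theorem sFlip_idT_pow_eq_smul [Fintype ι] [DecidableEq ι] (par : ι → ℕ) {n m : ℕ}
    (hω_mem : ∀ X ∈ L, ω X ∈ L)
    (hω_par : ∀ X ∈ L, ω (epsMat par * X * epsMat par) = epsMat par * ω X * epsMat par)
    (hord : ∀ Y ∈ L, (ω ^ n) Y = Y) (hK : K ∈ tensorSq L) (hK_sym : sFlip par K = K)
    (hωK : idT ω (tId ω K) = ζ • K) (hm : m ≤ n) :
    sFlip par (idT ⇑(ω ^ m) K) = ζ ^ m • idT ⇑(ω ^ (n - m)) K := by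
  rw [sFlip_idT_of_mem_tensorSq par (ω.pow_commute_epsConj par hω_mem hω_par m) hK, hK_sym,
    tId_pow_eq_smul_idT_pow hord hK hωK hm]

end Twisted

theorem rFun_antisymmetric_general [Fintype ι] [DecidableEq ι] (par : ι → ℕ)
    (L : Submodule ℂ (Matrix ι ι ℂ))
    (K : Matrix (ι × ι) (ι × ι) ℂ)
    -- `K ∈ a ⊗ a`
    (hK_mem : K ∈ Submodule.span ℂ {Z | ∃ X ∈ L, ∃ Y ∈ L, Z = tmat X Y})
    -- `K` is symmetric: `K₁₂ = K₂₁`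
    (hK_sym : sFlip par K = K)
    (n : ℕ)
    -- `ω` is an automorphism of the Lie superalgebra `a` of order `n`
    (ω : Matrix ι ι ℂ →ₗ[ℂ] Matrix ι ι ℂ)
    (hω_mem : ∀ X ∈ L, ω X ∈ L)
    (hω_par : ∀ X ∈ L, ω (epsMat par * X * epsMat par) = epsMat par * ω X * epsMat par)
    (hω_ord : ∀ X ∈ L, (⇑ω)^[n] X = X)
    -- `ζ` is a primitive `n`-th root of unity and `(ω⊗ω)(K) = ζ·K`
    (ζ : ℂ) (hζ : IsPrimitiveRoot ζ n)
    (hωK : idT (⇑ω) (tId (⇑ω) K) = ζ • K)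
    (u v : ℂ) :
    rFun n ζ (⇑ω) K u v + sFlip par (rFun n ζ (⇑ω) K v u) = 0 := by
  have hord : ∀ X ∈ L, (ω ^ n) X = X := fun X hX =>
    (Module.End.pow_apply ω n X).trans (hω_ord X hX)
  set g : ℕ → Matrix (ι × ι) (ι × ι) ℂ := fun m => (u - ζ ^ m * v)⁻¹ • idT ⇑(ω ^ m) K
  have hflip : ∀ m ∈ Finset.range n,
      sFlip par ((v - ζ ^ m * u)⁻¹ • idT ⇑(ω ^ m) K) = -g (n - m) := by
    intro m hm_range
    have hm : m ≤ n := (Finset.mem_range.1 hm_range).le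
    have hζm : ζ ^ m * ζ ^ (n - m) = 1 := by rw [← pow_add, Nat.add_sub_cancel' hm, hζ.pow_eq_one]
    rw [sFlip_smul, sFlip_idT_pow_eq_smul par hω_mem hω_par hord hK_mem hK_sym hωK hm, smul_smul,
      inv_sub_mul_mul_eq_neg_inv hζm, neg_smul]
  have hperiodic : g n = g 0 := by
    simp only [g, hζ.pow_eq_one, pow_zero, idT_eq_self_of_mem_tensorSq hord hK_mem]
    rfl
  simp only [rFun, ← Module.End.coe_pow, sFlip_sum]
  rw [Finset.sum_congr rfl hflip, Finset.sum_neg_distrib,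
    Finset.sum_range_sub_eq_of_periodic g hperiodic, add_neg_cancel]

/-- Antisymmetry of the twisted rational function:
`r₁₂(u,v) + r₂₁(v,u) = 0`, where `r₂₁(v,u)` is the super flip of `r(v,u)`. -/
theorem rFun_antisymmetric [Fintype ι] [DecidableEq ι] (par : ι → ℕ)
    (L : Submodule ℂ (Matrix ι ι ℂ))
    -- `L` is a graded subspace, closed under the supercommutator (a Lie superalgebra)
    (hL_graded : ∀ X ∈ L, epsMat par * X * epsMat par ∈ L)
    (hL_lie : ∀ X ∈ L, ∀ Y ∈ L, sbr par X Y ∈ L)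
    (K : Matrix (ι × ι) (ι × ι) ℂ)
    -- `K ∈ a ⊗ a`
    (hK_mem : K ∈ Submodule.span ℂ {Z | ∃ X ∈ L, ∃ Y ∈ L, Z = tmat X Y})
    -- `K` is even
    (hK_even : ∀ p q : ι × ι, (par p.1 + par p.2 + par q.1 + par q.2) % 2 = 1 → K p q = 0)
    -- `K` is symmetric: `K₁₂ = K₂₁`
    (hK_sym : sFlip par K = K)
    -- `K` is `a`-invariant: `[X⊗1 + 1⊗X, K] = 0` for all `X ∈ a`
    (hK_inv : ∀ X ∈ L, sbr2 par (tmat X 1 + tmat 1 X) K = 0)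
    (n : ℕ) (hn : 0 < n)
    -- `ω` is an automorphism of the Lie superalgebra `a` of order `n`
    (ω : Matrix ι ι ℂ →ₗ[ℂ] Matrix ι ι ℂ)
    (hω_mem : ∀ X ∈ L, ω X ∈ L)
    (hω_bij : ∀ Y ∈ L, ∃ X ∈ L, ω X = Y)
    (hω_lie : ∀ X ∈ L, ∀ Y ∈ L, ω (sbr par X Y) = sbr par (ω X) (ω Y))
    (hω_par : ∀ X ∈ L, ω (epsMat par * X * epsMat par) = epsMat par * ω X * epsMat par)
    (hω_ord : ∀ X ∈ L, (⇑ω)^[n] X = X)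
    -- `ζ` is a primitive `n`-th root of unity and `(ω⊗ω)(K) = ζ·K`
    (ζ : ℂ) (hζ : IsPrimitiveRoot ζ n)
    (hωK : idT (⇑ω) (tId (⇑ω) K) = ζ • K)
    (u v : ℂ) (hu : ∀ m < n, u ≠ ζ ^ m * v) (hv : ∀ m < n, v ≠ ζ ^ m * u) :
    rFun n ζ (⇑ω) K u v + sFlip par (rFun n ζ (⇑ω) K v u) = 0 :=
  rFun_antisymmetric_general par L K hK_mem hK_sym n ω hω_mem hω_par hω_ord ζ hζ hωK u v
end

section
/- Let a be a finite-dimensional Lie superalgebra, K ∈ a⊗a an even, symmetric, a-invariant element, ω an automorphism of a of order n with (ω⊗ω)(K) = ζ·K for ζ a primitive n-th root of unity. Then r(u,v) = Σ_{m ∈ ℤ/n} (id⊗ω^m)(K)/(u − ζ^m v) satisfies the classical Yang–Baxter equation: [r_{12}(u,v), r_{13}(u,w)] + [r_{12}(u,v), r_{23}(v,w)] + [r_{13}(u,w), r_{23}(v,w)] = 0 in U(a)^{⊗3}(u,v,w). -/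
open Matrix

/- We model the finite-dimensional Lie superalgebra `a` as a ℤ₂-graded subspace `L` of a
matrix superalgebra `Matrix ι ι ℂ` (with parity function `par` on the indices), closed
under the supercommutator — every finite-dimensional Lie superalgebra admits such a
faithful realization.  Elements of the super tensor square `a ⊗ a` are recorded by their
coefficient matrices: `Z p q` is the coefficient of `E_{p.1 q.1} ⊗ E_{p.2 q.2}`. -/

variable {ι : Type*}

/-- Triple super tensor product: coefficient matrices, `Z p q` the coefficient of
`E_{p.1 q.1} ⊗ E_{p.2.1 q.2.1} ⊗ E_{p.2.2 q.2.2}`. -/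
noncomputable def sMul3 [Fintype ι] (par : ι → ℕ)
    (Z W : Matrix (ι × ι × ι) (ι × ι × ι) ℂ) : Matrix (ι × ι × ι) (ι × ι × ι) ℂ :=
  Matrix.of fun p q => ∑ a : ι, ∑ b : ι, ∑ c : ι,
    (-1 : ℂ) ^ ((par a + par q.1) * (par p.2.1 + par b + par p.2.2 + par c)
        + (par b + par q.2.1) * (par p.2.2 + par c))
      * Z p (a, b, c) * W (a, b, c) q

/-- The odd part of an element of the triple super tensor product. -/
noncomputable def oddPart3 (par : ι → ℕ) (Z : Matrix (ι × ι × ι) (ι × ι × ι) ℂ) :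
    Matrix (ι × ι × ι) (ι × ι × ι) ℂ :=
  Matrix.of fun p q =>
    if (par p.1 + par p.2.1 + par p.2.2 + par q.1 + par q.2.1 + par q.2.2) % 2 = 1
    then Z p q else 0

/-- The supercommutator in the triple super tensor product. -/
noncomputable def sbr3 [Fintype ι] (par : ι → ℕ)
    (Z W : Matrix (ι × ι × ι) (ι × ι × ι) ℂ) : Matrix (ι × ι × ι) (ι × ι × ι) ℂ :=
  sMul3 par Z W - sMul3 par W Z + (2 : ℂ) • sMul3 par (oddPart3 par W) (oddPart3 par Z)

/-- Embedding of the super tensor square into factors 1,2 of the triple product. -/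
noncomputable def emb12 [DecidableEq ι] (Z : Matrix (ι × ι) (ι × ι) ℂ) :
    Matrix (ι × ι × ι) (ι × ι × ι) ℂ :=
  Matrix.of fun p q => Z (p.1, p.2.1) (q.1, q.2.1) * (if p.2.2 = q.2.2 then 1 else 0)

/-- Embedding of the super tensor square into factors 1,3 of the triple product. -/
noncomputable def emb13 [DecidableEq ι] (Z : Matrix (ι × ι) (ι × ι) ℂ) :
    Matrix (ι × ι × ι) (ι × ι × ι) ℂ :=
  Matrix.of fun p q => Z (p.1, p.2.2) (q.1, q.2.2) * (if p.2.1 = q.2.1 then 1 else 0)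

/-- Embedding of the super tensor square into factors 2,3 of the triple product. -/
noncomputable def emb23 [DecidableEq ι] (Z : Matrix (ι × ι) (ι × ι) ℂ) :
    Matrix (ι × ι × ι) (ι × ι × ι) ℂ :=
  Matrix.of fun p q => (if p.1 = q.1 then 1 else 0) * Z p.2 q.2

/-!
Write `K_m = (id ⊗ ω^m) K`. Transporting the invariance of `K` by the super Lie automorphism
`ω^m` in the second factor shows that `K_m` supercommutes with `X ⊗ 1 + 1 ⊗ ω^m X` for `X ∈ a`.
Reading the triple brackets slice by slice in the remaining tensor factor, this gives
`[K_a^{12}, K_{a+c}^{13}] = -ζ^a [K_a^{12}, K_c^{23}]`, because `(ω^a ⊗ 1) K_{a+c} = ζ^a K_c` by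
`(ω ⊗ ω) K = ζ K`, and `[K_{a+c}^{13}, K_c^{23}] = -[K_a^{12}, K_c^{23}]`.
As `K_m` and `ζ^m` are `n`-periodic in `m`, substituting `b = a + c` for the index of the
`13`-factor turns the left-hand side of the Yang–Baxter equation into
`∑ a c, λ_{ac} [K_a^{12}, K_c^{23}]`, and every `λ_{ac}` vanishes by the partial-fraction identity
`1 / ((u - ζ^a v) (v - ζ^c w)) = (ζ^a / (u - ζ^a v) + 1 / (v - ζ^c w)) / (u - ζ^(a+c) w)`.
-/

open Finset

lemma Function.Periodic.sum_range_add {M : Type*} [AddCancelCommMonoid M] {f : ℕ → M} {n : ℕ}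
    (hf : Function.Periodic f n) (a : ℕ) : ∑ c ∈ range n, f (a + c) = ∑ b ∈ range n, f b := by
  induction a with
  | zero => simp
  | succ a ih =>
    rw [← ih]
    refine add_right_cancel (b := f a) ?_
    have h := sum_range_succ' (fun c => f (a + c)) n
    rw [sum_range_succ, add_zero, hf a] at h
    rw [h]
    exact congrArg (· + f a) (sum_congr rfl fun c _ => by rw [add_right_comm, add_assoc])

lemma neg_one_pow_mul_mul_congr {R : Type*} [Ring R] {m k : ℕ} {a b : R}
    (h : a ≠ 0 → b ≠ 0 → (Even m ↔ Even k)) :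
    (-1 : R) ^ m * a * b = (-1) ^ k * a * b := by
  rcases eq_or_ne a 0 with ha | ha
  · simp [ha]
  rcases eq_or_ne b 0 with hb | hb
  · simp [hb]
  rw [neg_one_pow_congr (h ha hb)]

namespace SuperCYBE

lemma sum_cybe_eq_zero {M : Type*} [AddCommGroup M] [Module ℂ M] {n : ℕ} {ζ u v w : ℂ}
    (hζ : ζ ^ n = 1) (huv : ∀ m < n, u ≠ ζ ^ m * v) (huw : ∀ m < n, u ≠ ζ ^ m * w)
    (hvw : ∀ m < n, v ≠ ζ ^ m * w) (P Q R : ℕ → ℕ → M)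
    (hP : ∀ a, Function.Periodic (P a) n) (hR : ∀ c, Function.Periodic (fun b => R b c) n)
    (hPQ : ∀ a c, P a (a + c) = -ζ ^ a • Q a c) (hRQ : ∀ a c, R (a + c) c = -Q a c) :
    ∑ a ∈ range n, ∑ b ∈ range n, ((u - ζ ^ a * v)⁻¹ * (u - ζ ^ b * w)⁻¹) • P a b
      + ∑ a ∈ range n, ∑ b ∈ range n, ((u - ζ ^ a * v)⁻¹ * (v - ζ ^ b * w)⁻¹) • Q a b
      + ∑ a ∈ range n, ∑ b ∈ range n, ((u - ζ ^ a * w)⁻¹ * (v - ζ ^ b * w)⁻¹) • R a b = 0 := by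
  have hζper : Function.Periodic (ζ ^ ·) n := fun b => by simp only [pow_add, hζ, mul_one]
  have hP_sum : ∀ a, ∑ b ∈ range n, ((u - ζ ^ a * v)⁻¹ * (u - ζ ^ b * w)⁻¹) • P a b
      = ∑ c ∈ range n, (-((u - ζ ^ a * v)⁻¹ * (u - ζ ^ (a + c) * w)⁻¹ * ζ ^ a)) • Q a c := by
    intro a
    rw [← Function.Periodic.sum_range_add (fun b => by simp only [hζper b, hP a b]) a]
    refine sum_congr rfl fun c _ => ?_
    rw [hPQ, smul_smul]
    congr 1
    ring
  have hR_sum : ∑ b ∈ range n, ∑ c ∈ range n, ((u - ζ ^ b * w)⁻¹ * (v - ζ ^ c * w)⁻¹) • R b c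
      = ∑ a ∈ range n, ∑ c ∈ range n, (-((u - ζ ^ (a + c) * w)⁻¹ * (v - ζ ^ c * w)⁻¹)) • Q a c := by
    rw [sum_comm]
    conv_rhs => rw [sum_comm]
    refine sum_congr rfl fun c _ => ?_
    rw [← Function.Periodic.sum_range_add (fun b => by simp only [hζper b, hR c b]) c]
    refine sum_congr rfl fun a _ => ?_
    rw [add_comm c a, hRQ, smul_neg, neg_smul]
  simp only [hP_sum, hR_sum, ← sum_add_distrib, ← add_smul]
  refine sum_eq_zero fun a ha => sum_eq_zero fun c hc => ?_
  rw [mem_range] at ha hc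
  have hα := sub_ne_zero.mpr (huv a ha)
  have hγ := sub_ne_zero.mpr (hvw c hc)
  have hβ : u - ζ ^ (a + c) * w ≠ 0 := by
    rw [← hζper.map_mod_nat]
    exact sub_ne_zero.mpr (huw _ (Nat.mod_lt _ (by omega)))
  rw [← zero_smul ℂ (Q a c)]
  congr 1
  rw [pow_add] at hβ ⊢
  field_simp
  ring

variable {par : ι → ℕ}

section Parity

def IsHomogeneous (par : ι → ℕ) (d : ℕ) (M : Matrix ι ι ℂ) : Prop :=
  ∀ i j, M i j ≠ 0 → (Even (par i + par j) ↔ Even d)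

def IsEven₂ (par : ι → ℕ) (Z : Matrix (ι × ι) (ι × ι) ℂ) : Prop :=
  ∀ p q : ι × ι, (par p.1 + par p.2 + par q.1 + par q.2) % 2 = 1 → Z p q = 0

def IsEven₃ (par : ι → ℕ) (Z : Matrix (ι × ι × ι) (ι × ι × ι) ℂ) : Prop :=
  ∀ p q : ι × ι × ι,
    (par p.1 + par p.2.1 + par p.2.2 + par q.1 + par q.2.1 + par q.2.2) % 2 = 1 → Z p q = 0

lemma IsEven₂.even_of_ne_zero {Z : Matrix (ι × ι) (ι × ι) ℂ} (hZ : IsEven₂ par Z)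
    {p q : ι × ι} (h : Z p q ≠ 0) : Even (par p.1 + par p.2 + par q.1 + par q.2) :=
  Nat.even_iff.mpr (by by_contra h'; exact h (hZ p q (by omega)))

lemma oddPart2_eq_zero {Z : Matrix (ι × ι) (ι × ι) ℂ} (hZ : IsEven₂ par Z) :
    oddPart2 par Z = 0 := by
  ext p q
  simp only [oddPart2, Matrix.of_apply, Matrix.zero_apply]
  split_ifs with h
  exacts [hZ p q h, rfl]

lemma oddPart3_eq_zero {Z : Matrix (ι × ι × ι) (ι × ι × ι) ℂ} (hZ : IsEven₃ par Z) :
    oddPart3 par Z = 0 := by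
  ext p q
  simp only [oddPart3, Matrix.of_apply, Matrix.zero_apply]
  split_ifs with h
  exacts [hZ p q h, rfl]

variable [DecidableEq ι]

lemma isEven₃_emb12 {Z : Matrix (ι × ι) (ι × ι) ℂ} (hZ : IsEven₂ par Z) :
    IsEven₃ par (emb12 Z) := by
  intro p q h
  simp only [emb12, Matrix.of_apply]
  split_ifs with he
  · rw [hZ (p.1, p.2.1) (q.1, q.2.1) (by simp only [he] at h ⊢; omega), zero_mul]
  · rw [mul_zero]

lemma isEven₃_emb23 {Z : Matrix (ι × ι) (ι × ι) ℂ} (hZ : IsEven₂ par Z) :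
    IsEven₃ par (emb23 Z) := by
  intro p q h
  simp only [emb23, Matrix.of_apply]
  split_ifs with he
  · rw [hZ p.2 q.2 (by simp only [he] at h ⊢; omega), mul_zero]
  · rw [zero_mul]

end Parity

section ParityConj

def parityConj (par : ι → ℕ) (m : ℕ) (M : Matrix ι ι ℂ) : Matrix ι ι ℂ :=
  Matrix.of fun i j => (-1 : ℂ) ^ (m * (par i + par j)) * M i j

lemma parityConj_eq_smul {d : ℕ} {M : Matrix ι ι ℂ} (hM : IsHomogeneous par d M) (m : ℕ) :
    parityConj par m M = (-1 : ℂ) ^ (m * d) • M := by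
  ext i j
  by_cases h : M i j = 0
  · simp [parityConj, h]
  · simp only [parityConj, Matrix.of_apply, Matrix.smul_apply, smul_eq_mul]
    rw [neg_one_pow_congr (n := m * d) (by simp only [Nat.even_mul, hM i j h])]

lemma parityConj_of_even {m : ℕ} (hm : Even m) (M : Matrix ι ι ℂ) : parityConj par m M = M := by
  ext i j
  simp [parityConj, (hm.mul_right _).neg_one_pow]

variable [Fintype ι] [DecidableEq ι]

lemma epsMat_mul_mul_epsMat (M : Matrix ι ι ℂ) :
    epsMat par * M * epsMat par = parityConj par 1 M := by
  ext i j
  simp only [epsMat, Matrix.mul_diagonal, Matrix.diagonal_mul, parityConj, Matrix.of_apply,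
    one_mul, pow_add]
  ring

lemma parityConj_of_odd {m : ℕ} (hm : Odd m) (M : Matrix ι ι ℂ) :
    parityConj par m M = epsMat par * M * epsMat par := by
  ext i j
  rw [epsMat_mul_mul_epsMat]
  simp only [parityConj, Matrix.of_apply]
  rw [neg_one_pow_congr (n := 1 * (par i + par j))
    (by simp [Nat.even_mul, Nat.not_even_iff_odd.mpr hm])]

lemma epsMat_mul_epsMat : epsMat par * epsMat par = (1 : Matrix ι ι ℂ) := by
  simp [epsMat, ← mul_pow]

lemma isHomogeneous_iff {d : ℕ} {M : Matrix ι ι ℂ} :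
    IsHomogeneous par d M ↔ epsMat par * M * epsMat par = (-1 : ℂ) ^ d • M := by
  rw [epsMat_mul_mul_epsMat]
  refine ⟨fun hM => by rw [parityConj_eq_smul hM, one_mul], fun h i j hij => ?_⟩
  have hij' := congr_fun₂ h i j
  simp only [parityConj, Matrix.of_apply, Matrix.smul_apply, smul_eq_mul, one_mul] at hij'
  by_contra hne
  rw [neg_one_pow_eq_ite, neg_one_pow_eq_ite] at hij'
  split_ifs at hij' with h1 h2 h2
  · exact hne (iff_of_true h1 h2)
  · exact hij (by linear_combination hij' / 2)
  · exact hij (by linear_combination -hij' / 2)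
  · exact hne (iff_of_false h1 h2)

lemma sbr_parityConj {m : ℕ} {S : Matrix ι ι ℂ} (hS : IsHomogeneous par m S)
    (X : Matrix ι ι ℂ) : sbr par (parityConj par m X) S = parityConj par m X * S - S * X := by
  have hεS := isHomogeneous_iff.mp hS
  rcases Nat.even_or_odd m with hm | hm
  · have : oddPart par S = 0 := by
      rw [oddPart, hεS, hm.neg_one_pow, one_smul, sub_self, smul_zero]
    rw [sbr, this, parityConj_of_even hm, Matrix.zero_mul, smul_zero, add_zero]
  · have hS' : oddPart par S = S := by
      rw [oddPart, hεS, hm.neg_one_pow, neg_one_smul, sub_neg_eq_add, ← two_smul ℂ, smul_smul,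
        inv_mul_cancel₀ two_ne_zero, one_smul]
    have hX' : oddPart par (epsMat par * X * epsMat par)
        = (2⁻¹ : ℂ) • (epsMat par * X * epsMat par - X) := by
      rw [oddPart, show epsMat par * (epsMat par * X * epsMat par) * epsMat par
          = (epsMat par * epsMat par) * X * (epsMat par * epsMat par) by noncomm_ring,
        epsMat_mul_epsMat, Matrix.one_mul, Matrix.mul_one]
    rw [sbr, parityConj_of_odd hm, hS', hX', Matrix.mul_smul, smul_smul,
      mul_inv_cancel₀ two_ne_zero, one_smul, Matrix.mul_sub]
    abel

end ParityConj

section SuperLieHom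

variable [Fintype ι] [DecidableEq ι]

structure IsSuperLieHom (par : ι → ℕ) (L : Submodule ℂ (Matrix ι ι ℂ))
    (f : Matrix ι ι ℂ →ₗ[ℂ] Matrix ι ι ℂ) : Prop where
  map_mem : Set.MapsTo f L L
  map_sbr : ∀ X ∈ L, ∀ Y ∈ L, f (sbr par X Y) = sbr par (f X) (f Y)
  map_epsMat_conj : ∀ X ∈ L, f (epsMat par * X * epsMat par) = epsMat par * f X * epsMat par

namespace IsSuperLieHom

variable {L : Submodule ℂ (Matrix ι ι ℂ)} {f g : Matrix ι ι ℂ →ₗ[ℂ] Matrix ι ι ℂ}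

lemma one : IsSuperLieHom par L 1 :=
  ⟨Set.mapsTo_id _, fun _ _ _ _ => rfl, fun _ _ => rfl⟩

lemma mul (hf : IsSuperLieHom par L f) (hg : IsSuperLieHom par L g) :
    IsSuperLieHom par L (f * g) where
  map_mem := hf.map_mem.comp hg.map_mem
  map_sbr X hX Y hY := by
    simp only [Module.End.mul_apply, hg.map_sbr X hX Y hY,
      hf.map_sbr _ (hg.map_mem hX) _ (hg.map_mem hY)]
  map_epsMat_conj X hX := by
    simp only [Module.End.mul_apply, hg.map_epsMat_conj X hX, hf.map_epsMat_conj _ (hg.map_mem hX)]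

lemma pow (hf : IsSuperLieHom par L f) (m : ℕ) : IsSuperLieHom par L (f ^ m) := by
  induction m with
  | zero => exact one
  | succ m ih => rw [pow_succ]; exact ih.mul hf

lemma map_parityConj (hf : IsSuperLieHom par L f) (m : ℕ) {X : Matrix ι ι ℂ} (hX : X ∈ L) :
    f (parityConj par m X) = parityConj par m (f X) := by
  rcases Nat.even_or_odd m with hm | hm
  · rw [parityConj_of_even hm, parityConj_of_even hm]
  · rw [parityConj_of_odd hm, parityConj_of_odd hm, hf.map_epsMat_conj X hX]

lemma isHomogeneous (hf : IsSuperLieHom par L f) {d : ℕ} {X : Matrix ι ι ℂ} (hX : X ∈ L)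
    (hXd : IsHomogeneous par d X) : IsHomogeneous par d (f X) := by
  rw [isHomogeneous_iff] at hXd ⊢
  rw [← hf.map_epsMat_conj X hX, hXd, map_smul]

end IsSuperLieHom

lemma parityConj_mem {L : Submodule ℂ (Matrix ι ι ℂ)}
    (hL : ∀ X ∈ L, epsMat par * X * epsMat par ∈ L) (m : ℕ) {X : Matrix ι ι ℂ} (hX : X ∈ L) :
    parityConj par m X ∈ L := by
  rcases Nat.even_or_odd m with hm | hm
  · rwa [parityConj_of_even hm]
  · rw [parityConj_of_odd hm]; exact hL X hX

end SuperLieHom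

section Slices

/-- `Z = ∑ s t, slice₁ Z s t ⊗ E_st = ∑ s t, E_st ⊗ slice₂ Z s t`. -/
def slice₁ (Z : Matrix (ι × ι) (ι × ι) ℂ) (s t : ι) : Matrix ι ι ℂ :=
  Matrix.of fun i j => Z (i, s) (j, t)

def slice₂ (Z : Matrix (ι × ι) (ι × ι) ℂ) (s t : ι) : Matrix ι ι ℂ :=
  Matrix.of fun j l => Z (s, j) (t, l)

lemma slice₁_tmat (X Y : Matrix ι ι ℂ) (s t : ι) : slice₁ (tmat X Y) s t = Y s t • X := by
  ext i j
  simp [slice₁, tmat, mul_comm]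

lemma slice₂_tmat (X Y : Matrix ι ι ℂ) (s t : ι) : slice₂ (tmat X Y) s t = X s t • Y := by
  ext j l
  simp [slice₂, tmat]

def slice₁ₗ (s t : ι) : Matrix (ι × ι) (ι × ι) ℂ →ₗ[ℂ] Matrix ι ι ℂ where
  toFun Z := slice₁ Z s t
  map_add' _ _ := rfl
  map_smul' _ _ := rfl

def slice₂ₗ (s t : ι) : Matrix (ι × ι) (ι × ι) ℂ →ₗ[ℂ] Matrix ι ι ℂ where
  toFun Z := slice₂ Z s t
  map_add' _ _ := rfl
  map_smul' _ _ := rfl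

lemma ext_slice₂ {Z W : Matrix (ι × ι) (ι × ι) ℂ} (h : ∀ s t, slice₂ Z s t = slice₂ W s t) :
    Z = W := by
  ext p q
  exact congr_fun₂ (h p.1 q.1) p.2 q.2

lemma idT_apply (f : Matrix ι ι ℂ → Matrix ι ι ℂ) (Z : Matrix (ι × ι) (ι × ι) ℂ) (p q : ι × ι) :
    idT f Z p q = f (slice₂ Z p.1 q.1) p.2 q.2 := rfl

lemma slice₂_idT (f : Matrix ι ι ℂ → Matrix ι ι ℂ) (Z : Matrix (ι × ι) (ι × ι) ℂ) (s t : ι) :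
    slice₂ (idT f Z) s t = f (slice₂ Z s t) := rfl

variable (f : Matrix ι ι ℂ →ₗ[ℂ] Matrix ι ι ℂ)

noncomputable def idTₗ : Matrix (ι × ι) (ι × ι) ℂ →ₗ[ℂ] Matrix (ι × ι) (ι × ι) ℂ where
  toFun := idT f
  map_add' Z W := by
    ext p q
    exact congr_fun₂ (f.map_add (slice₂ Z p.1 q.1) (slice₂ W p.1 q.1)) p.2 q.2
  map_smul' c Z := by
    ext p q
    exact congr_fun₂ (f.map_smul c (slice₂ Z p.1 q.1)) p.2 q.2

noncomputable def tIdₗ : Matrix (ι × ι) (ι × ι) ℂ →ₗ[ℂ] Matrix (ι × ι) (ι × ι) ℂ where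
  toFun := tId f
  map_add' Z W := by
    ext p q
    exact congr_fun₂ (f.map_add (slice₁ Z p.2 q.2) (slice₁ W p.2 q.2)) p.1 q.1
  map_smul' c Z := by
    ext p q
    exact congr_fun₂ (f.map_smul c (slice₁ Z p.2 q.2)) p.1 q.1

lemma idT_smul (c : ℂ) (Z : Matrix (ι × ι) (ι × ι) ℂ) : idT f (c • Z) = c • idT f Z :=
  (idTₗ f).map_smul c Z

lemma tId_smul (c : ℂ) (Z : Matrix (ι × ι) (ι × ι) ℂ) : tId f (c • Z) = c • tId f Z :=
  (tIdₗ f).map_smul c Z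

lemma idT_tmat (X Y : Matrix ι ι ℂ) : idT f (tmat X Y) = tmat X (f Y) := by
  ext p q
  rw [idT_apply, slice₂_tmat, map_smul]
  simp [tmat]

lemma tId_tmat (X Y : Matrix ι ι ℂ) : tId f (tmat X Y) = tmat (f X) Y := by
  ext p q
  change f (slice₁ (tmat X Y) p.2 q.2) p.1 q.1 = _
  rw [slice₁_tmat, map_smul]
  simp [tmat, mul_comm]

end Slices

section TensorSquare

/-- The image of `L ⊗ L` in the coefficient matrices. -/
def tensorSq (L : Submodule ℂ (Matrix ι ι ℂ)) : Submodule ℂ (Matrix (ι × ι) (ι × ι) ℂ) :=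
  Submodule.span ℂ {Z | ∃ X ∈ L, ∃ Y ∈ L, Z = tmat X Y}

variable {L : Submodule ℂ (Matrix ι ι ℂ)} {Z : Matrix (ι × ι) (ι × ι) ℂ}

lemma slice₁_mem (hZ : Z ∈ tensorSq L) (s t : ι) : slice₁ Z s t ∈ L := by
  refine (Submodule.span_le (p := L.comap (slice₁ₗ s t))).mpr ?_ hZ
  rintro _ ⟨X, hX, Y, -, rfl⟩
  change slice₁ (tmat X Y) s t ∈ L
  rw [slice₁_tmat]
  exact L.smul_mem _ hX

lemma slice₂_mem (hZ : Z ∈ tensorSq L) (s t : ι) : slice₂ Z s t ∈ L := by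
  refine (Submodule.span_le (p := L.comap (slice₂ₗ s t))).mpr ?_ hZ
  rintro _ ⟨X, -, Y, hY, rfl⟩
  change slice₂ (tmat X Y) s t ∈ L
  rw [slice₂_tmat]
  exact L.smul_mem _ hY

lemma idT_mem {f : Matrix ι ι ℂ →ₗ[ℂ] Matrix ι ι ℂ} (hf : Set.MapsTo f L L)
    (hZ : Z ∈ tensorSq L) : idT f Z ∈ tensorSq L := by
  refine (Submodule.span_le (p := (tensorSq L).comap (idTₗ f))).mpr ?_ hZ
  rintro _ ⟨X, hX, Y, hY, rfl⟩
  change idT f (tmat X Y) ∈ tensorSq L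
  rw [idT_tmat]
  exact Submodule.subset_span ⟨X, hX, f Y, hf hY, rfl⟩

lemma tId_idT_comm (F G : Matrix ι ι ℂ →ₗ[ℂ] Matrix ι ι ℂ) (hZ : Z ∈ tensorSq L) :
    tId F (idT G Z) = idT G (tId F Z) := by
  refine LinearMap.eqOn_span' (f := tIdₗ F ∘ₗ idTₗ G) (g := idTₗ G ∘ₗ tIdₗ F) ?_ hZ
  rintro _ ⟨X, -, Y, -, rfl⟩
  change tId F (idT G (tmat X Y)) = idT G (tId F (tmat X Y))
  rw [idT_tmat, tId_tmat, tId_tmat, idT_tmat]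

lemma idT_eq_self {g : Matrix ι ι ℂ → Matrix ι ι ℂ} (hg : ∀ X ∈ L, g X = X)
    (hZ : Z ∈ tensorSq L) : idT g Z = Z := by
  ext p q
  rw [idT_apply, hg _ (slice₂_mem hZ _ _)]
  rfl

lemma tId_pow_idT_pow {f : Matrix ι ι ℂ →ₗ[ℂ] Matrix ι ι ℂ} (hf : Set.MapsTo f L L)
    {K : Matrix (ι × ι) (ι × ι) ℂ} (hK : K ∈ tensorSq L) {ζ : ℂ}
    (hfK : idT f (tId f K) = ζ • K) (a c : ℕ) :
    tId ⇑(f ^ a) (idT ⇑(f ^ (a + c)) K) = ζ ^ a • idT ⇑(f ^ c) K := by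
  have hpow : ∀ m, Set.MapsTo ⇑(f ^ m) L L := fun m => by
    rw [Module.End.coe_pow]; exact hf.iterate m
  have hdiag : ∀ a, tId ⇑(f ^ a) (idT ⇑(f ^ a) K) = ζ ^ a • K := by
    intro a
    induction a with
    | zero => rw [pow_zero, pow_zero, one_smul]; rfl
    | succ a ih =>
      change tId ⇑(f ^ a) (tId f (idT ⇑(f ^ a) (idT f K))) = _
      rw [tId_idT_comm f (f ^ a) (idT_mem hf hK), tId_idT_comm f f hK, hfK, idT_smul,
        tId_smul, ih, smul_smul, pow_succ']
  rw [add_comm, pow_add]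
  change tId ⇑(f ^ a) (idT ⇑(f ^ c) (idT ⇑(f ^ a) K)) = _
  rw [tId_idT_comm _ _ (idT_mem (hpow a) hK), hdiag, idT_smul]

end TensorSquare

lemma IsEven₂.isHomogeneous_slice₂ {Z : Matrix (ι × ι) (ι × ι) ℂ} (hZ : IsEven₂ par Z)
    (s t : ι) : IsHomogeneous par (par s + par t) (slice₂ Z s t) := fun j l h => by
  have := hZ.even_of_ne_zero h
  simp only [Nat.even_add] at this ⊢
  tauto

lemma IsEven₂.idT [Fintype ι] [DecidableEq ι] {L : Submodule ℂ (Matrix ι ι ℂ)}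
    {f : Matrix ι ι ℂ →ₗ[ℂ] Matrix ι ι ℂ} {Z : Matrix (ι × ι) (ι × ι) ℂ} (hZ : IsEven₂ par Z)
    (hZL : Z ∈ tensorSq L) (hf : IsSuperLieHom par L f) : IsEven₂ par (idT f Z) := by
  intro p q h
  by_contra hne
  have := hf.isHomogeneous (slice₂_mem hZL _ _) (hZ.isHomogeneous_slice₂ p.1 q.1) p.2 q.2 hne
  simp only [Nat.even_iff] at this
  omega

section SuperTensorSquare

variable [Fintype ι]

lemma sMul2_add_left (Z W V : Matrix (ι × ι) (ι × ι) ℂ) :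
    sMul2 par (Z + W) V = sMul2 par Z V + sMul2 par W V := by
  ext p q
  simp only [sMul2, Matrix.of_apply, Matrix.add_apply, ← sum_add_distrib]
  exact sum_congr rfl fun k _ => sum_congr rfl fun l _ => by ring

lemma sMul2_add_right (Z W V : Matrix (ι × ι) (ι × ι) ℂ) :
    sMul2 par V (Z + W) = sMul2 par V Z + sMul2 par V W := by
  ext p q
  simp only [sMul2, Matrix.of_apply, Matrix.add_apply, ← sum_add_distrib]
  exact sum_congr rfl fun k _ => sum_congr rfl fun l _ => by ring

lemma sbr2_of_isEven₂ {W : Matrix (ι × ι) (ι × ι) ℂ} (hW : IsEven₂ par W)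
    (Z : Matrix (ι × ι) (ι × ι) ℂ) : sbr2 par Z W = sMul2 par Z W - sMul2 par W Z := by
  have h0 : sMul2 par 0 (oddPart2 par Z) = 0 := by ext; simp [sMul2]
  rw [sbr2, oddPart2_eq_zero hW, h0, smul_zero, add_zero]

variable [DecidableEq ι]

lemma slice₂_sMul2_tmat_one_left (X : Matrix ι ι ℂ) (Z : Matrix (ι × ι) (ι × ι) ℂ) (s t : ι) :
    slice₂ (sMul2 par (tmat X 1) Z) s t = ∑ k, X s k • slice₂ Z k t := by
  ext j l
  simp [slice₂, sMul2, tmat, Matrix.one_apply, Matrix.sum_apply]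

lemma slice₂_sMul2_tmat_one_right (X : Matrix ι ι ℂ) (Z : Matrix (ι × ι) (ι × ι) ℂ) (s t : ι) :
    slice₂ (sMul2 par Z (tmat X 1)) s t
      = ∑ k, X k t • parityConj par (par k + par t) (slice₂ Z s k) := by
  ext j l
  simp only [slice₂, sMul2, tmat, Matrix.one_apply, mul_ite, mul_one, mul_zero, Matrix.of_apply,
    sum_ite_eq', mem_univ, ↓reduceIte, parityConj, Matrix.smul_of, Matrix.sum_apply,
    Pi.smul_apply, smul_eq_mul]
  exact sum_congr rfl fun k _ => by ring

lemma slice₂_sMul2_one_tmat_sub (Y : Matrix ι ι ℂ) (Z : Matrix (ι × ι) (ι × ι) ℂ) (s t : ι) :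
    slice₂ (sMul2 par (tmat 1 Y) Z - sMul2 par Z (tmat 1 Y)) s t
      = parityConj par (par s + par t) Y * slice₂ Z s t - slice₂ Z s t * Y := by
  ext j l
  simp [slice₂, sMul2, tmat, Matrix.one_apply, parityConj, Matrix.mul_apply]

lemma slice₂_sbr2_tmat_add {Z : Matrix (ι × ι) (ι × ι) ℂ} (hZ : IsEven₂ par Z)
    (X Y : Matrix ι ι ℂ) (s t : ι) :
    slice₂ (sbr2 par (tmat X 1 + tmat 1 Y) Z) s t
      = (∑ k, X s k • slice₂ Z k t - ∑ k, X k t • parityConj par (par k + par t) (slice₂ Z s k))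
        + (parityConj par (par s + par t) Y * slice₂ Z s t - slice₂ Z s t * Y) := by
  rw [← slice₂_sMul2_tmat_one_left, ← slice₂_sMul2_tmat_one_right, ← slice₂_sMul2_one_tmat_sub,
    sbr2_of_isEven₂ hZ, sMul2_add_left, sMul2_add_right]
  change slice₂ₗ s t _ = slice₂ₗ s t _ - slice₂ₗ s t _ + slice₂ₗ s t _
  rw [← map_sub, ← map_add]
  congr 1
  abel

end SuperTensorSquare

section Invariance

variable [Fintype ι] [DecidableEq ι]

structure IsEvenInvariant (par : ι → ℕ) (L : Submodule ℂ (Matrix ι ι ℂ))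
    (K : Matrix (ι × ι) (ι × ι) ℂ) : Prop where
  mem : K ∈ tensorSq L
  isEven₂ : IsEven₂ par K
  sbr2_eq_zero : ∀ X ∈ L, sbr2 par (tmat X 1 + tmat 1 X) K = 0

variable {L : Submodule ℂ (Matrix ι ι ℂ)} {f : Matrix ι ι ℂ →ₗ[ℂ] Matrix ι ι ℂ}
  {K : Matrix (ι × ι) (ι × ι) ℂ}

/-- `X ⊗ 1` commutes with `id ⊗ f`, while on each slice the bracket with `1 ⊗ X` is the
supercommutator `sbr (parityConj _ X) (slice₂ K s t)`, which `f` preserves. -/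
lemma IsEvenInvariant.sbr2_idT_eq_zero (hK : IsEvenInvariant par L K)
    (hL : ∀ X ∈ L, epsMat par * X * epsMat par ∈ L) (hf : IsSuperLieHom par L f)
    {X : Matrix ι ι ℂ} (hX : X ∈ L) : sbr2 par (tmat X 1 + tmat 1 (f X)) (idT f K) = 0 := by
  refine ext_slice₂ fun s t => ?_
  have hS := hK.isEven₂.isHomogeneous_slice₂ s t
  have hSL := slice₂_mem hK.mem s t
  have hsbr : f (parityConj par (par s + par t) X * slice₂ K s t - slice₂ K s t * X)
      = parityConj par (par s + par t) (f X) * f (slice₂ K s t) - f (slice₂ K s t) * f X := by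
    rw [← sbr_parityConj hS, hf.map_sbr _ (parityConj_mem hL _ hX) _ hSL,
      hf.map_parityConj _ hX, sbr_parityConj (hf.isHomogeneous hSL hS)]
  have h0 := congrArg (fun W => f (slice₂ W s t)) (hK.sbr2_eq_zero X hX)
  simp only [slice₂_sbr2_tmat_add hK.isEven₂, map_add, map_sub, map_sum, map_smul, hsbr,
    hf.map_parityConj _ (slice₂_mem hK.mem _ _)] at h0
  have hzero : slice₂ (0 : Matrix (ι × ι) (ι × ι) ℂ) s t = 0 := (slice₂ₗ s t).map_zero
  rw [slice₂_sbr2_tmat_add (hK.isEven₂.idT hK.mem hf)]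
  simp only [slice₂_idT]
  rw [h0, hzero, map_zero]

end Invariance

section TripleProduct

variable [Fintype ι] [DecidableEq ι]

lemma sMul3_emb12_emb13_apply (A B : Matrix (ι × ι) (ι × ι) ℂ) (p q : ι × ι × ι) :
    sMul3 par (emb12 A) (emb13 B) p q
      = sMul2 par A (tmat (slice₁ B p.2.2 q.2.2) 1) (p.1, p.2.1) (q.1, q.2.1) := by
  simp only [sMul3, emb12, mul_ite, mul_one, mul_zero, Matrix.of_apply, emb13, ite_mul, zero_mul,
    sum_ite_irrel, sum_ite_eq, mem_univ, ↓reduceIte, sum_const_zero, sum_ite_eq', sMul2, tmat,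
    slice₁, Matrix.one_apply]
  exact sum_congr rfl fun x _ => neg_one_pow_mul_mul_congr fun _ _ => by
    simp only [Nat.even_add, Nat.even_mul]; grind

lemma sMul3_emb13_emb12_apply {A : Matrix (ι × ι) (ι × ι) ℂ} (hA : IsEven₂ par A)
    (B : Matrix (ι × ι) (ι × ι) ℂ) (p q : ι × ι × ι) :
    sMul3 par (emb13 B) (emb12 A) p q
      = sMul2 par (tmat (slice₁ B p.2.2 q.2.2) 1) A (p.1, p.2.1) (q.1, q.2.1) := by
  simp only [sMul3, emb13, mul_ite, mul_one, mul_zero, Matrix.of_apply, emb12, ite_mul, zero_mul,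
    sum_ite_eq', mem_univ, ↓reduceIte, sum_ite_eq, sMul2, tmat, slice₁, Matrix.one_apply]
  exact sum_congr rfl fun x _ => neg_one_pow_mul_mul_congr fun _ hx => by
    have := hA.even_of_ne_zero hx
    simp only [Nat.even_add, Nat.even_mul] at this ⊢; grind

lemma sMul3_emb12_emb23_apply_slice₁ (A C : Matrix (ι × ι) (ι × ι) ℂ) (p q : ι × ι × ι) :
    sMul3 par (emb12 A) (emb23 C) p q
      = sMul2 par A (tmat 1 (slice₁ C p.2.2 q.2.2)) (p.1, p.2.1) (q.1, q.2.1) := by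
  simp only [sMul3, emb12, mul_ite, mul_one, mul_zero, Matrix.of_apply, emb23, ite_mul, one_mul,
    zero_mul, sum_ite_irrel, sum_ite_eq, mem_univ, ↓reduceIte, sum_const_zero, sum_ite_eq', sMul2,
    tmat, Matrix.one_apply, slice₁, Prod.mk.eta]
  exact sum_congr rfl fun x _ => neg_one_pow_mul_mul_congr fun _ _ => by
    simp only [Nat.even_add, Nat.even_mul]; grind

lemma sMul3_emb23_emb12_apply_slice₁ {A : Matrix (ι × ι) (ι × ι) ℂ} (hA : IsEven₂ par A)
    (C : Matrix (ι × ι) (ι × ι) ℂ) (p q : ι × ι × ι) :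
    sMul3 par (emb23 C) (emb12 A) p q
      = sMul2 par (tmat 1 (slice₁ C p.2.2 q.2.2)) A (p.1, p.2.1) (q.1, q.2.1) := by
  simp only [sMul3, emb23, ite_mul, one_mul, zero_mul, Matrix.of_apply, mul_ite, mul_zero, emb12,
    mul_one, sum_ite_eq', mem_univ, ↓reduceIte, sum_ite_irrel, sum_const_zero, sum_ite_eq, sMul2,
    tmat, Matrix.one_apply, slice₁, Prod.mk.eta]
  exact sum_congr rfl fun x _ => neg_one_pow_mul_mul_congr fun _ hx => by
    have := hA.even_of_ne_zero hx
    simp only [Nat.even_add, Nat.even_mul] at this ⊢; grind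

lemma sMul3_emb12_emb23_apply_slice₂ (B A : Matrix (ι × ι) (ι × ι) ℂ) (p q : ι × ι × ι) :
    sMul3 par (emb12 B) (emb23 A) p q = sMul2 par (tmat (slice₂ B p.1 q.1) 1) A p.2 q.2 := by
  simp only [sMul3, emb12, mul_ite, mul_one, mul_zero, Matrix.of_apply, emb23, ite_mul, one_mul,
    zero_mul, sum_ite_irrel, sum_ite_eq, mem_univ, ↓reduceIte, sum_const_zero, sum_ite_eq', sMul2,
    tmat, slice₂, Matrix.one_apply]
  exact sum_congr rfl fun x _ => neg_one_pow_mul_mul_congr fun _ _ => by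
    simp only [Nat.even_add, Nat.even_mul]; grind

lemma sMul3_emb13_emb23_apply (C A : Matrix (ι × ι) (ι × ι) ℂ) (p q : ι × ι × ι) :
    sMul3 par (emb13 C) (emb23 A) p q = sMul2 par (tmat 1 (slice₂ C p.1 q.1)) A p.2 q.2 := by
  simp only [sMul3, emb13, mul_ite, mul_one, mul_zero, Matrix.of_apply, emb23, ite_mul, one_mul,
    zero_mul, sum_ite_irrel, sum_const_zero, sum_ite_eq, mem_univ, ↓reduceIte, sum_ite_eq', sMul2,
    tmat, Matrix.one_apply, slice₂]
  exact sum_congr rfl fun x _ => neg_one_pow_mul_mul_congr fun _ _ => by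
    simp only [Nat.even_add, Nat.even_mul]; grind

lemma sMul3_emb23_emb12_apply_slice₂ {A : Matrix (ι × ι) (ι × ι) ℂ} (hA : IsEven₂ par A)
    (B : Matrix (ι × ι) (ι × ι) ℂ) (p q : ι × ι × ι) :
    sMul3 par (emb23 A) (emb12 B) p q = sMul2 par A (tmat (slice₂ B p.1 q.1) 1) p.2 q.2 := by
  simp only [sMul3, emb23, ite_mul, one_mul, zero_mul, Matrix.of_apply, mul_ite, mul_zero, emb12,
    mul_one, sum_ite_eq', mem_univ, ↓reduceIte, sum_ite_irrel, sum_const_zero, sum_ite_eq, sMul2,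
    tmat, slice₂, Matrix.one_apply]
  exact sum_congr rfl fun x _ => neg_one_pow_mul_mul_congr fun hx _ => by
    have := hA.even_of_ne_zero hx
    simp only [Nat.even_add, Nat.even_mul] at this ⊢; grind

lemma sMul3_emb23_emb13_apply {A : Matrix (ι × ι) (ι × ι) ℂ} (hA : IsEven₂ par A)
    (C : Matrix (ι × ι) (ι × ι) ℂ) (p q : ι × ι × ι) :
    sMul3 par (emb23 A) (emb13 C) p q = sMul2 par A (tmat 1 (slice₂ C p.1 q.1)) p.2 q.2 := by
  simp only [sMul3, emb23, ite_mul, one_mul, zero_mul, Matrix.of_apply, mul_ite, mul_zero, emb13,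
    mul_one, sum_ite_irrel, sum_const_zero, sum_ite_eq', mem_univ, ↓reduceIte, sum_ite_eq, sMul2,
    tmat, Matrix.one_apply, slice₂]
  exact sum_congr rfl fun x _ => neg_one_pow_mul_mul_congr fun hx _ => by
    have := hA.even_of_ne_zero hx
    simp only [Nat.even_add, Nat.even_mul] at this ⊢; grind

end TripleProduct

section TripleBracket

variable [Fintype ι]

lemma sMul3_add_left (Z W V : Matrix (ι × ι × ι) (ι × ι × ι) ℂ) :
    sMul3 par (Z + W) V = sMul3 par Z V + sMul3 par W V := by
  ext p q
  simp only [sMul3, Matrix.of_apply, Matrix.add_apply, ← sum_add_distrib]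
  exact sum_congr rfl fun a _ => sum_congr rfl fun b _ => sum_congr rfl fun c _ => by ring

lemma sMul3_add_right (V Z W : Matrix (ι × ι × ι) (ι × ι × ι) ℂ) :
    sMul3 par V (Z + W) = sMul3 par V Z + sMul3 par V W := by
  ext p q
  simp only [sMul3, Matrix.of_apply, Matrix.add_apply, ← sum_add_distrib]
  exact sum_congr rfl fun a _ => sum_congr rfl fun b _ => sum_congr rfl fun c _ => by ring

lemma sMul3_smul_left (x : ℂ) (Z V : Matrix (ι × ι × ι) (ι × ι × ι) ℂ) :
    sMul3 par (x • Z) V = x • sMul3 par Z V := by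
  ext p q
  simp only [sMul3, Matrix.of_apply, Matrix.smul_apply, smul_eq_mul, mul_sum]
  exact sum_congr rfl fun a _ => sum_congr rfl fun b _ => sum_congr rfl fun c _ => by ring

lemma sMul3_smul_right (x : ℂ) (V Z : Matrix (ι × ι × ι) (ι × ι × ι) ℂ) :
    sMul3 par V (x • Z) = x • sMul3 par V Z := by
  ext p q
  simp only [sMul3, Matrix.of_apply, Matrix.smul_apply, smul_eq_mul, mul_sum]
  exact sum_congr rfl fun a _ => sum_congr rfl fun b _ => sum_congr rfl fun c _ => by ring

variable (par) in
noncomputable def sMul3ₗ :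
    Matrix (ι × ι × ι) (ι × ι × ι) ℂ →ₗ[ℂ] Matrix (ι × ι × ι) (ι × ι × ι) ℂ →ₗ[ℂ]
      Matrix (ι × ι × ι) (ι × ι × ι) ℂ :=
  LinearMap.mk₂ ℂ (sMul3 par) sMul3_add_left sMul3_smul_left sMul3_add_right sMul3_smul_right

variable (par) in
noncomputable def oddPart3ₗ :
    Matrix (ι × ι × ι) (ι × ι × ι) ℂ →ₗ[ℂ] Matrix (ι × ι × ι) (ι × ι × ι) ℂ where
  toFun := oddPart3 par
  map_add' Z W := by
    ext p q
    simp only [oddPart3, Matrix.of_apply, Matrix.add_apply]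
    split_ifs <;> simp
  map_smul' x Z := by
    ext p q
    simp only [oddPart3, Matrix.of_apply, Matrix.smul_apply]
    split_ifs <;> simp

variable (par) in
noncomputable def sbr3ₗ :
    Matrix (ι × ι × ι) (ι × ι × ι) ℂ →ₗ[ℂ] Matrix (ι × ι × ι) (ι × ι × ι) ℂ →ₗ[ℂ]
      Matrix (ι × ι × ι) (ι × ι × ι) ℂ :=
  sMul3ₗ par - (sMul3ₗ par).flip
    + (2 : ℂ) • ((sMul3ₗ par).compl₁₂ (oddPart3ₗ par) (oddPart3ₗ par)).flip

lemma sbr3ₗ_apply (Z W : Matrix (ι × ι × ι) (ι × ι × ι) ℂ) : sbr3ₗ par Z W = sbr3 par Z W := rfl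

lemma sbr3_sum_smul_sum {α β : Type*} (s : Finset α) (t : Finset β) (x : α → ℂ) (y : β → ℂ)
    (Z : α → Matrix (ι × ι × ι) (ι × ι × ι) ℂ) (W : β → Matrix (ι × ι × ι) (ι × ι × ι) ℂ) :
    sbr3 par (∑ a ∈ s, x a • Z a) (∑ b ∈ t, y b • W b)
      = ∑ a ∈ s, ∑ b ∈ t, (x a * y b) • sbr3 par (Z a) (W b) := by
  simp only [← sbr3ₗ_apply, map_sum, map_smul, LinearMap.sum_apply, LinearMap.smul_apply,
    smul_sum, smul_smul, mul_comm (y _)]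
  exact sum_comm

lemma sbr3_of_isEven₃_left {Z : Matrix (ι × ι × ι) (ι × ι × ι) ℂ} (hZ : IsEven₃ par Z)
    (W : Matrix (ι × ι × ι) (ι × ι × ι) ℂ) : sbr3 par Z W = sMul3 par Z W - sMul3 par W Z := by
  rw [sbr3, oddPart3_eq_zero hZ, ← zero_smul ℂ (0 : Matrix _ _ ℂ), sMul3_smul_right, zero_smul,
    smul_zero, add_zero]

lemma sbr3_of_isEven₃_right {W : Matrix (ι × ι × ι) (ι × ι × ι) ℂ} (hW : IsEven₃ par W)
    (Z : Matrix (ι × ι × ι) (ι × ι × ι) ℂ) : sbr3 par Z W = sMul3 par Z W - sMul3 par W Z := by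
  rw [sbr3, oddPart3_eq_zero hW, ← zero_smul ℂ (0 : Matrix _ _ ℂ), sMul3_smul_left, zero_smul,
    smul_zero, add_zero]

end TripleBracket

section Embeddings

variable [DecidableEq ι]

noncomputable def emb12ₗ : Matrix (ι × ι) (ι × ι) ℂ →ₗ[ℂ] Matrix (ι × ι × ι) (ι × ι × ι) ℂ where
  toFun := emb12
  map_add' Z W := by ext; simp only [emb12, Matrix.of_apply, Matrix.add_apply, add_mul]
  map_smul' x Z := by ext; simp [emb12]

noncomputable def emb13ₗ : Matrix (ι × ι) (ι × ι) ℂ →ₗ[ℂ] Matrix (ι × ι × ι) (ι × ι × ι) ℂ where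
  toFun := emb13
  map_add' Z W := by ext; simp only [emb13, Matrix.of_apply, Matrix.add_apply, add_mul]
  map_smul' x Z := by ext; simp [emb13]

noncomputable def emb23ₗ : Matrix (ι × ι) (ι × ι) ℂ →ₗ[ℂ] Matrix (ι × ι × ι) (ι × ι × ι) ℂ where
  toFun := emb23
  map_add' Z W := by ext; simp [emb23, mul_add]
  map_smul' x Z := by ext; simp [emb23, mul_left_comm]

lemma emb12ₗ_apply (Z : Matrix (ι × ι) (ι × ι) ℂ) : emb12ₗ Z = emb12 Z := rfl

lemma emb13ₗ_apply (Z : Matrix (ι × ι) (ι × ι) ℂ) : emb13ₗ Z = emb13 Z := rfl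

lemma emb23ₗ_apply (Z : Matrix (ι × ι) (ι × ι) ℂ) : emb23ₗ Z = emb23 Z := rfl

variable [Fintype ι] {A B C : Matrix (ι × ι) (ι × ι) ℂ}

/-- Slice by slice in the third factor, this is the action of
`slice₁ B s t ⊗ 1 + 1 ⊗ slice₁ C s t` on `A`. -/
lemma sbr3_emb12_emb13_add_emb23_eq_zero (hA : IsEven₂ par A)
    (h : ∀ s t, sbr2 par (tmat (slice₁ B s t) 1 + tmat 1 (slice₁ C s t)) A = 0) :
    sbr3 par (emb12 A) (emb13 B + emb23 C) = 0 := by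
  ext p q
  have hpq := congr_fun₂ (h p.2.2 q.2.2) (p.1, p.2.1) (q.1, q.2.1)
  rw [sbr2_of_isEven₂ hA, sMul2_add_left, sMul2_add_right] at hpq
  rw [sbr3_of_isEven₃_left (isEven₃_emb12 hA), sMul3_add_right, sMul3_add_left]
  simp only [Matrix.sub_apply, Matrix.add_apply, Matrix.zero_apply, sMul3_emb12_emb13_apply,
    sMul3_emb12_emb23_apply_slice₁, sMul3_emb13_emb12_apply hA,
    sMul3_emb23_emb12_apply_slice₁ hA] at hpq ⊢
  linear_combination -hpq

lemma sbr3_emb12_add_emb13_emb23_eq_zero (hA : IsEven₂ par A)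
    (h : ∀ s t, sbr2 par (tmat (slice₂ B s t) 1 + tmat 1 (slice₂ C s t)) A = 0) :
    sbr3 par (emb12 B + emb13 C) (emb23 A) = 0 := by
  ext p q
  have hpq := congr_fun₂ (h p.1 q.1) p.2 q.2
  rw [sbr2_of_isEven₂ hA, sMul2_add_left, sMul2_add_right] at hpq
  rw [sbr3_of_isEven₃_right (isEven₃_emb23 hA), sMul3_add_right, sMul3_add_left]
  simp only [Matrix.sub_apply, Matrix.add_apply, Matrix.zero_apply,
    sMul3_emb12_emb23_apply_slice₂, sMul3_emb13_emb23_apply, sMul3_emb23_emb12_apply_slice₂ hA,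
    sMul3_emb23_emb13_apply hA] at hpq ⊢
  linear_combination hpq

end Embeddings

section TwistedRelations

variable [Fintype ι] [DecidableEq ι] {L : Submodule ℂ (Matrix ι ι ℂ)}
  {f : Matrix ι ι ℂ →ₗ[ℂ] Matrix ι ι ℂ} {K : Matrix (ι × ι) (ι × ι) ℂ}

lemma sbr3_emb12_emb13_idT_pow (hK : IsEvenInvariant par L K)
    (hL : ∀ X ∈ L, epsMat par * X * epsMat par ∈ L) (hf : IsSuperLieHom par L f) {ζ : ℂ}
    (hfK : idT f (tId f K) = ζ • K) (a c : ℕ) :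
    sbr3 par (emb12 (idT ⇑(f ^ a) K)) (emb13 (idT ⇑(f ^ (a + c)) K))
      = -ζ ^ a • sbr3 par (emb12 (idT ⇑(f ^ a) K)) (emb23 (idT ⇑(f ^ c) K)) := by
  have hB := idT_mem (hf.pow (a + c)).map_mem hK.mem
  have h := sbr3_emb12_emb13_add_emb23_eq_zero (C := tId ⇑(f ^ a) (idT ⇑(f ^ (a + c)) K))
    (hK.isEven₂.idT hK.mem (hf.pow a))
    fun s t => hK.sbr2_idT_eq_zero hL (hf.pow a) (slice₁_mem hB s t)
  rw [tId_pow_idT_pow hf.map_mem hK.mem hfK, ← emb23ₗ_apply, map_smul, ← sbr3ₗ_apply, map_add,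
    map_smul, sbr3ₗ_apply, sbr3ₗ_apply, emb23ₗ_apply] at h
  rw [neg_smul]
  exact eq_neg_of_add_eq_zero_left h

lemma sbr3_emb13_emb23_idT_pow (hK : IsEvenInvariant par L K)
    (hL : ∀ X ∈ L, epsMat par * X * epsMat par ∈ L) (hf : IsSuperLieHom par L f) (a c : ℕ) :
    sbr3 par (emb13 (idT ⇑(f ^ (a + c)) K)) (emb23 (idT ⇑(f ^ c) K))
      = -sbr3 par (emb12 (idT ⇑(f ^ a) K)) (emb23 (idT ⇑(f ^ c) K)) := by
  have h := sbr3_emb12_add_emb13_emb23_eq_zero (B := idT ⇑(f ^ a) K)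
    (C := idT ⇑(f ^ (a + c)) K) (hK.isEven₂.idT hK.mem (hf.pow c)) fun s t => by
      rw [slice₂_idT, slice₂_idT, add_comm a c, pow_add, Module.End.mul_apply]
      exact hK.sbr2_idT_eq_zero hL (hf.pow c) ((hf.pow a).map_mem (slice₂_mem hK.mem s t))
  rw [← sbr3ₗ_apply, map_add, LinearMap.add_apply, sbr3ₗ_apply, sbr3ₗ_apply] at h
  exact eq_neg_of_add_eq_zero_right h

end TwistedRelations

end SuperCYBE

open SuperCYBE in
theorem rFun_CYBE_general [Fintype ι] [DecidableEq ι] (par : ι → ℕ)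
    (L : Submodule ℂ (Matrix ι ι ℂ))
    (hL_graded : ∀ X ∈ L, epsMat par * X * epsMat par ∈ L)
    (K : Matrix (ι × ι) (ι × ι) ℂ)
    (hK_mem : K ∈ Submodule.span ℂ {Z | ∃ X ∈ L, ∃ Y ∈ L, Z = tmat X Y})
    (hK_even : ∀ p q : ι × ι, (par p.1 + par p.2 + par q.1 + par q.2) % 2 = 1 → K p q = 0)
    (hK_inv : ∀ X ∈ L, sbr2 par (tmat X 1 + tmat 1 X) K = 0)
    (n : ℕ)
    (ω : Matrix ι ι ℂ →ₗ[ℂ] Matrix ι ι ℂ)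
    (hω_mem : ∀ X ∈ L, ω X ∈ L)
    (hω_lie : ∀ X ∈ L, ∀ Y ∈ L, ω (sbr par X Y) = sbr par (ω X) (ω Y))
    (hω_par : ∀ X ∈ L, ω (epsMat par * X * epsMat par) = epsMat par * ω X * epsMat par)
    (hω_ord : ∀ X ∈ L, (⇑ω)^[n] X = X)
    (ζ : ℂ) (hζ : IsPrimitiveRoot ζ n)
    (hωK : idT (⇑ω) (tId (⇑ω) K) = ζ • K)
    (u v w : ℂ)
    (huv : ∀ m < n, u ≠ ζ ^ m * v)
    (huw : ∀ m < n, u ≠ ζ ^ m * w)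
    (hvw : ∀ m < n, v ≠ ζ ^ m * w) :
    sbr3 par (emb12 (rFun n ζ (⇑ω) K u v)) (emb13 (rFun n ζ (⇑ω) K u w))
      + sbr3 par (emb12 (rFun n ζ (⇑ω) K u v)) (emb23 (rFun n ζ (⇑ω) K v w))
      + sbr3 par (emb13 (rFun n ζ (⇑ω) K u w)) (emb23 (rFun n ζ (⇑ω) K v w)) = 0 := by
  have hK : IsEvenInvariant par L K := ⟨hK_mem, hK_even, hK_inv⟩
  have hω : IsSuperLieHom par L ω := ⟨fun X hX => hω_mem X hX, hω_lie, hω_par⟩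
  set Kω : ℕ → Matrix (ι × ι) (ι × ι) ℂ := fun m => idT ⇑(ω ^ m) K
  have hr : ∀ x y, rFun n ζ ω K x y = ∑ m ∈ range n, (x - ζ ^ m * y)⁻¹ • Kω m := by
    simp [rFun, Kω, Module.End.coe_pow]
  have hper : Function.Periodic Kω n := fun m => by
    simp only [Kω, pow_add]
    change idT ⇑(ω ^ m) (idT ⇑(ω ^ n) K) = idT ⇑(ω ^ m) K
    rw [idT_eq_self (fun X hX => by rw [Module.End.coe_pow]; exact hω_ord X hX) hK_mem]
  simp only [hr, ← emb12ₗ_apply, ← emb13ₗ_apply, ← emb23ₗ_apply, map_sum, map_smul,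
    sbr3_sum_smul_sum]
  exact sum_cybe_eq_zero hζ.pow_eq_one huv huw hvw _ _ _ (fun a b => by simp only [hper b])
    (fun c b => by simp only [hper b]) (sbr3_emb12_emb13_idT_pow hK hL_graded hω hωK)
    (sbr3_emb13_emb23_idT_pow hK hL_graded hω)

/-- The classical Yang–Baxter equation for the twisted rational function
`r(u,v) = Σ_{m ∈ ℤ/n} (id ⊗ ω^m)(K)/(u - ζ^m v)`:
`[r₁₂(u,v), r₁₃(u,w)] + [r₁₂(u,v), r₂₃(v,w)] + [r₁₃(u,w), r₂₃(v,w)] = 0`. -/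
theorem rFun_CYBE [Fintype ι] [DecidableEq ι] (par : ι → ℕ)
    (L : Submodule ℂ (Matrix ι ι ℂ))
    (hL_graded : ∀ X ∈ L, epsMat par * X * epsMat par ∈ L)
    (hL_lie : ∀ X ∈ L, ∀ Y ∈ L, sbr par X Y ∈ L)
    (K : Matrix (ι × ι) (ι × ι) ℂ)
    (hK_mem : K ∈ Submodule.span ℂ {Z | ∃ X ∈ L, ∃ Y ∈ L, Z = tmat X Y})
    (hK_even : ∀ p q : ι × ι, (par p.1 + par p.2 + par q.1 + par q.2) % 2 = 1 → K p q = 0)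
    (hK_sym : sFlip par K = K)
    (hK_inv : ∀ X ∈ L, sbr2 par (tmat X 1 + tmat 1 X) K = 0)
    (n : ℕ) (hn : 0 < n)
    (ω : Matrix ι ι ℂ →ₗ[ℂ] Matrix ι ι ℂ)
    (hω_mem : ∀ X ∈ L, ω X ∈ L)
    (hω_bij : ∀ Y ∈ L, ∃ X ∈ L, ω X = Y)
    (hω_lie : ∀ X ∈ L, ∀ Y ∈ L, ω (sbr par X Y) = sbr par (ω X) (ω Y))
    (hω_par : ∀ X ∈ L, ω (epsMat par * X * epsMat par) = epsMat par * ω X * epsMat par)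
    (hω_ord : ∀ X ∈ L, (⇑ω)^[n] X = X)
    (ζ : ℂ) (hζ : IsPrimitiveRoot ζ n)
    (hωK : idT (⇑ω) (tId (⇑ω) K) = ζ • K)
    (u v w : ℂ)
    (huv : ∀ m < n, u ≠ ζ ^ m * v)
    (huw : ∀ m < n, u ≠ ζ ^ m * w)
    (hvw : ∀ m < n, v ≠ ζ ^ m * w) :
    sbr3 par (emb12 (rFun n ζ (⇑ω) K u v)) (emb13 (rFun n ζ (⇑ω) K u w))
      + sbr3 par (emb12 (rFun n ζ (⇑ω) K u v)) (emb23 (rFun n ζ (⇑ω) K v w))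
      + sbr3 par (emb13 (rFun n ζ (⇑ω) K u w)) (emb23 (rFun n ζ (⇑ω) K v w)) = 0 :=
  rFun_CYBE_general par L hL_graded K hK_mem hK_even hK_inv n ω hω_mem hω_lie hω_par hω_ord ζ hζ hωK
    u v w huv huw hvw
end
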